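/- Let f be a non-zero vector of a metric vector space (V,Q) such that f ∈ V^⊥ and Q(f) ≠ 0. Then ΔO(V,Q,f) = ΔO'(V,Q,f) = {id_V}. -/

import Mathlib

/-! Setting: a field `F`, a finite-dimensional `F`-vector space `V`, a quadratic form
`Q : V → F` with polar form `B = QuadraticMap.polar Q` (the bilinear map `Q.polarBilin`),
induced map `D = Q.polarBilin : V →ₗ[F] Module.Dual F V`, and radical
`V^⊥ = LinearMap.ker Q.polarBilin`. -/

variable {F V : Type*} [Field F] [AddCommGroup V] [Module F V] [FiniteDimensional F V]

/-- The map `δ_{c*,f} : x ↦ x + ⟨c*,x⟩ • f`. -/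
def deltaMap (c : Module.Dual F V) (f : V) : V →ₗ[F] V :=
  LinearMap.id + c.smulRight f

/-- The orthogonal group `O(V,Q)`, as a set of linear endomorphisms. -/
def orthSet (Q : QuadraticForm F V) : Set (V →ₗ[F] V) :=
  {φ | Function.Bijective φ ∧ ∀ x, Q (φ x) = Q x}

/-- The weak orthogonal group `O'(V,Q)`: isometries fixing the radical elementwise. -/
def wOrthSet (Q : QuadraticForm F V) : Set (V →ₗ[F] V) :=
  {φ | Function.Bijective φ ∧ (∀ x, Q (φ x) = Q x) ∧
    ∀ x ∈ LinearMap.ker Q.polarBilin, φ x = x}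

/-- The group `Δ(V,f) = {δ_{a*,f} : a* ∈ V*, ⟨a*,f⟩ ≠ -1}`. -/
def deltaSet (f : V) : Set (V →ₗ[F] V) :=
  {φ | ∃ a : Module.Dual F V, a f ≠ -1 ∧ φ = deltaMap a f}

/-- The `Q`-reflection `ξ_r : x ↦ x - Q(r)⁻¹ • B(r,x) • r` in the direction of `r`. -/
noncomputable def xiMap (Q : QuadraticForm F V) (r : V) : V →ₗ[F] V :=
  LinearMap.id - (Q r)⁻¹ • (Q.polarBilin r).smulRight r

theorem QuadraticMap.map_add_smul_of_mem_ker_polarBilin {R M N : Type*} [CommRing R]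
    [AddCommGroup M] [Module R M] [AddCommGroup N] [Module R N] (Q : QuadraticMap R M N)
    {f : M} (hf : f ∈ LinearMap.ker Q.polarBilin) (x : M) (t : R) :
    Q (x + t • f) = Q x + (t * t) • Q f := by
  have hpolar : polar Q x f = 0 := by
    rw [polar_comm, ← polarBilin_apply_apply, LinearMap.mem_ker.mp hf, LinearMap.zero_apply]
  rw [QuadraticMap.map_add Q, QuadraticMap.map_smul, polar_smul_right, hpolar, smul_zero, add_zero]

omit [FiniteDimensional F V] in
@[simp]
theorem deltaMap_apply (c : Module.Dual F V) (f x : V) : deltaMap c f x = x + c x • f := rfl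

omit [FiniteDimensional F V] in
@[simp]
theorem deltaMap_zero (f : V) : deltaMap (0 : Module.Dual F V) f = LinearMap.id := by
  ext x
  simp

omit [FiniteDimensional F V] in
theorem id_mem_deltaSet (f : V) : (LinearMap.id : V →ₗ[F] V) ∈ deltaSet f :=
  ⟨0, by simp, (deltaMap_zero f).symm⟩

omit [FiniteDimensional F V] in
theorem id_mem_wOrthSet (Q : QuadraticForm F V) : LinearMap.id ∈ wOrthSet Q :=
  ⟨Function.bijective_id, fun _ ↦ rfl, fun _ _ ↦ rfl⟩

omit [FiniteDimensional F V] in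
theorem wOrthSet_subset_orthSet (Q : QuadraticForm F V) : wOrthSet Q ⊆ orthSet Q :=
  fun _ ⟨hbij, hiso, _⟩ ↦ ⟨hbij, hiso⟩

omit [FiniteDimensional F V] in
theorem eq_zero_of_deltaMap_isometry {Q : QuadraticForm F V} {f : V}
    (hfrad : f ∈ LinearMap.ker Q.polarBilin) (hQf : Q f ≠ 0) {a : Module.Dual F V}
    (hiso : ∀ x, Q (deltaMap a f x) = Q x) : a = 0 := by
  ext x
  have hsq : a x * a x * Q f = 0 := by
    have := hiso x
    rwa [deltaMap_apply, Q.map_add_smul_of_mem_ker_polarBilin hfrad, smul_eq_mul,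
      add_eq_left] at this
  simpa [hQf] using hsq

omit [FiniteDimensional F V] in
theorem deltaSet_inter_orthSet_subset {Q : QuadraticForm F V} {f : V}
    (hfrad : f ∈ LinearMap.ker Q.polarBilin) (hQf : Q f ≠ 0) :
    deltaSet f ∩ orthSet Q ⊆ {LinearMap.id} := by
  rintro _ ⟨⟨a, -, rfl⟩, -, hiso⟩
  rw [Set.mem_singleton_iff, eq_zero_of_deltaMap_isometry hfrad hQf hiso, deltaMap_zero]

theorem stmt2_general (Q : QuadraticForm F V) (f : V)
    (hfrad : f ∈ LinearMap.ker Q.polarBilin) (hQf : Q f ≠ 0) :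
    deltaSet f ∩ orthSet Q = ({LinearMap.id} : Set (V →ₗ[F] V)) ∧
    deltaSet f ∩ wOrthSet Q = ({LinearMap.id} : Set (V →ₗ[F] V)) := by
  have horth := deltaSet_inter_orthSet_subset hfrad hQf
  have hid : LinearMap.id ∈ deltaSet f ∩ wOrthSet Q := ⟨id_mem_deltaSet f, id_mem_wOrthSet Q⟩
  have hworth : deltaSet f ∩ wOrthSet Q ⊆ {LinearMap.id} :=
    (Set.inter_subset_inter_right _ (wOrthSet_subset_orthSet Q)).trans horth
  exact ⟨horth.antisymm (Set.singleton_subset_iff.mpr ⟨hid.1, wOrthSet_subset_orthSet Q hid.2⟩),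
    hworth.antisymm (Set.singleton_subset_iff.mpr hid)⟩

/-- Lemma 3.1(c): if `f ∈ V^⊥` and `Q f ≠ 0`, then `ΔO(V,Q,f) = ΔO'(V,Q,f) = {id}`. -/
theorem stmt2 (Q : QuadraticForm F V) (f : V) (hf : f ≠ 0)
    (hfrad : f ∈ LinearMap.ker Q.polarBilin) (hQf : Q f ≠ 0) :
    deltaSet f ∩ orthSet Q = ({LinearMap.id} : Set (V →ₗ[F] V)) ∧
    deltaSet f ∩ wOrthSet Q = ({LinearMap.id} : Set (V →ₗ[F] V)) :=
  stmt2_general Q f hfrad hQf
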